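/- Let m be a countably generated lawful monad, E a reflexive, transitive and compositional algebraic relation on m ℕ, and c : Q → m Empty a choice function. Then α_c : m Q → Q is an Eilenberg–Moore algebra for m: α_c (pure S) = S for all S : Q, and α_c (t >>= id) = α_c (map α_c t) for all t : m (m Q). -/
import Mathlib


/-- The embedding `ι : m Empty → m ℕ`, mapping along the unique function `Empty → ℕ`. -/
def iotaM {m : Type → Type} [Monad m] : m Empty → m ℕ :=
  fun a => (fun e : Empty => e.elim) <$> a

/-- The base relation `IU` on `m Empty` induced by an algebraic relation `E` on `m ℕ`. -/
def IU {m : Type → Type} [Monad m] (E : m ℕ → m ℕ → Prop) (a b : m Empty) : Prop :=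
  E (iotaM a) (iotaM b)

/-- The symmetrization `~` of the base relation. -/
def baseEquiv {m : Type → Type} [Monad m] (E : m ℕ → m ℕ → Prop) (a b : m Empty) : Prop :=
  IU E a b ∧ IU E b a

/-- The value space `Q`: the quotient of `m Empty` by `~`. -/
def ValueSpace (m : Type → Type) [Monad m] (E : m ℕ → m ℕ → Prop) : Type :=
  Quot (baseEquiv (m := m) E)

/-- The quotient map `⟦·⟧ : m Empty → Q`. -/
def qmk {m : Type → Type} [Monad m] (E : m ℕ → m ℕ → Prop) :
    m Empty → ValueSpace m E :=
  Quot.mk (baseEquiv E)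

/-- The algebra `α_c : m Q → Q` determined by a choice function `c : Q → m Empty`,
`α_c t = ⟦(map c t) >>= id⟧`. -/
def algC {m : Type → Type} [Monad m] (E : m ℕ → m ℕ → Prop)
    (c : ValueSpace m E → m Empty) : m (ValueSpace m E) → ValueSpace m E :=
  fun t => qmk E ((c <$> t) >>= id)


private lemma baseEquiv_of_qmk_eq {m : Type → Type} [Monad m] (E : m ℕ → m ℕ → Prop)
    (hrefl : ∀ a : m ℕ, E a a)
    (htrans : ∀ a b c : m ℕ, E a b → E b c → E a c)
    {a b : m Empty} (h : qmk E a = qmk E b) : baseEquiv E a b := by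
  have h' := Quot.eqvGen_exact h
  clear h
  induction h' with
  | rel _ _ h => exact h
  | refl x => exact ⟨hrefl _, hrefl _⟩
  | symm _ _ _ ih => exact ⟨ih.2, ih.1⟩
  | trans _ _ _ _ _ ih1 ih2 =>
      exact ⟨htrans _ _ _ ih1.1 ih2.1, htrans _ _ _ ih2.2 ih1.2⟩

/-- For a countably generated lawful monad `m`, a reflexive,
transitive, compositional algebraic relation `E`, and a choice function `c`,
the map `α_c : m Q → Q` is an Eilenberg–Moore algebra for `m`. -/
theorem algC_is_EM_algebra
    {m : Type → Type} [Monad m] [LawfulMonad m]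
    (E : m ℕ → m ℕ → Prop)
    (hgen : ∀ (X : Type) (t : m X), ∃ (k : m ℕ) (f : ℕ → X), f <$> k = t)
    (hrefl : ∀ a : m ℕ, E a a)
    (htrans : ∀ a b c : m ℕ, E a b → E b c → E a c)
    (hcomp : ∀ (a b : m ℕ) (f g : ℕ → m ℕ),
      E a b → (∀ n : ℕ, E (f n) (g n)) → E (a >>= f) (b >>= g))
    (c : ValueSpace m E → m Empty)
    (hc : ∀ S : ValueSpace m E, qmk E (c S) = S) :
    (∀ S : ValueSpace m E, algC E c (pure S) = S) ∧
    (∀ t : m (m (ValueSpace m E)), algC E c (t >>= id) = algC E c (algC E c <$> t)) := by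
  have key : ∀ s : m (ValueSpace m E),
      baseEquiv E ((c <$> s) >>= id) (c (algC E c s)) := by
    intro s
    exact baseEquiv_of_qmk_eq E hrefl htrans (hc (algC E c s)).symm
  constructor
  · intro S
    simp only [algC, map_pure, pure_bind, id]
    exact hc S
  · intro t
    obtain ⟨k, h, hk⟩ := hgen _ t
    show qmk E ((c <$> (t >>= id)) >>= id) = qmk E ((c <$> (algC E c <$> t)) >>= id)
    have hL : (c <$> (t >>= id)) >>= id = t >>= fun s => (c <$> s) >>= id := by
      simp [map_bind, bind_assoc]
    have hR : (c <$> (algC E c <$> t)) >>= id = t >>= fun s => c (algC E c s) := by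
      simp [Functor.map_map, bind_map_left]
    rw [hL, hR]
    apply Quot.sound
    have hiota : ∀ (F : m (ValueSpace m E) → m Empty),
        iotaM (t >>= F) = k >>= fun n => iotaM (F (h n)) := by
      intro F
      rw [← hk]
      simp [iotaM, map_bind, bind_map_left]
    constructor
    · show E (iotaM (t >>= fun s => (c <$> s) >>= id)) (iotaM (t >>= fun s => c (algC E c s)))
      rw [hiota, hiota]
      exact hcomp _ _ _ _ (hrefl k) fun n => (key (h n)).1
    · show E (iotaM (t >>= fun s => c (algC E c s))) (iotaM (t >>= fun s => (c <$> s) >>= id))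
      rw [hiota, hiota]
      exact hcomp _ _ _ _ (hrefl k) fun n => (key (h n)).2
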